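/- For the pentagonal linkage l = (1, 1, 1/4, 1/4, 1), the moduli space M(l), realized as the slice S(l) = { P : Fin 5 → ℝ² | P 0 = 0, P 1 = (1, 0), dist (P i) (P (i+1 mod 5)) = l i for all i }, has exactly two connected components, and each connected component (with its subspace topology) is homeomorphic to the 2-torus Circle × Circle. -/

import Mathlib

/-!
A configuration is determined by its two short edges `u / 4`, `v / 4` with `u v : Circle` and by
the long edge `z = P 2 - P 1`: closing the pentagon forces `‖z‖ = 1` and `‖z - c‖ = 1` with
`c = -(1 + (u + v) / 4)`. Since `1 / 2 ≤ ‖c‖ ≤ 3 / 2`, the unit circles about `0` and `c` meet in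
exactly two points, one on each side of the line `ℝ c`, and both depend continuously on `c`. So
`((u, v), side)` identifies the moduli space with `(Circle × Circle) × Bool`; the inverse map is a
continuous bijection from a compact space onto a Hausdorff one, hence a homeomorphism. The two
connected components are the two sheets `Circle × Circle × {b}`.
-/

abbrev pentagonTwoToriModuliSpace : Type :=
  {P : Fin 5 → ℂ // P 0 = 0 ∧ P 1 = 1 ∧
    ∀ i, dist (P i) (P (i + 1)) = ![1, 1, 1/4, 1/4, 1] i}

open Complex ComplexConjugate Set Topology

section CircleIntersection

variable {r : ℝ} {c z w : ℂ}

lemma two_mul_re_mul_conj_eq (hz : ‖z‖ = r) (hzc : ‖z - c‖ = r) :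
    2 * (z * conj c).re = ‖c‖ ^ 2 := by
  have h := normSq_sub z c
  rw [← Complex.sq_norm, ← Complex.sq_norm, ← Complex.sq_norm, hz, hzc] at h
  linarith

lemma im_mul_conj_sq_eq (hz : ‖z‖ = r) (hzc : ‖z - c‖ = r) :
    (z * conj c).im ^ 2 = ‖c‖ ^ 2 * (r ^ 2 - ‖c‖ ^ 2 / 4) := by
  have hre := two_mul_re_mul_conj_eq hz hzc
  have hnorm : (z * conj c).re ^ 2 + (z * conj c).im ^ 2 = r ^ 2 * ‖c‖ ^ 2 := by
    rw [sq, sq, ← normSq_apply, map_mul, normSq_conj, ← Complex.sq_norm, ← Complex.sq_norm, hz]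
  linear_combination hnorm - (z * conj c).re / 2 * hre - ‖c‖ ^ 2 / 4 * hre

/-- `0 < (z * conj c).im` says that `z` lies to the left of the line `ℝ c`. -/
lemma eq_of_norm_eq_of_norm_sub_eq (hc : c ≠ 0) (hz : ‖z‖ = r) (hzc : ‖z - c‖ = r)
    (hw : ‖w‖ = r) (hwc : ‖w - c‖ = r)
    (hside : 0 < (z * conj c).im ↔ 0 < (w * conj c).im) : z = w := by
  have hre : (z * conj c).re = (w * conj c).re := by
    linarith [two_mul_re_mul_conj_eq hz hzc, two_mul_re_mul_conj_eq hw hwc]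
  have him : (z * conj c).im = (w * conj c).im := by
    have hsq : (z * conj c).im ^ 2 = (w * conj c).im ^ 2 := by
      rw [im_mul_conj_sq_eq hz hzc, im_mul_conj_sq_eq hw hwc]
    rcases sq_eq_sq_iff_eq_or_eq_neg.1 hsq with h | h
    · exact h
    · rcases lt_trichotomy (w * conj c).im 0 with hneg | hzero | hpos
      · linarith [hside.1 (by linarith)]
      · linarith
      · linarith [hside.2 hpos]
  exact mul_right_cancel₀ ((map_ne_zero _).2 hc) (Complex.ext hre him)

/-- The point `c / 2 ± i h c / ‖c‖`, `h = √(r² - ‖c‖² / 4)`, where the circles of radius `r` about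
`0` and `c` meet; `s` selects the side of the line `ℝ c`. -/
noncomputable def circleIntersection (r : ℝ) (c : ℂ) (s : Bool) : ℂ :=
  (1 / 2 + ((if s then 1 else -1) * √(r ^ 2 - ‖c‖ ^ 2 / 4) / ‖c‖ : ℝ) * I) * c

lemma norm_half_add_mul_I_mul_sq (t : ℝ) (c : ℂ) :
    ‖(1 / 2 + t * I) * c‖ ^ 2 = (1 / 4 + t ^ 2) * ‖c‖ ^ 2 := by
  rw [norm_mul, mul_pow, Complex.sq_norm, ← ofReal_ofNat, ← ofReal_one, ← ofReal_div,
    normSq_add_mul_I]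
  ring

variable (s : Bool)

lemma quarter_add_sq_mul_norm_sq (hc : c ≠ 0) (hc2 : ‖c‖ ≤ 2 * r) :
    (1 / 4 + ((if s then 1 else -1) * √(r ^ 2 - ‖c‖ ^ 2 / 4) / ‖c‖) ^ 2) * ‖c‖ ^ 2 = r ^ 2 := by
  have hc0 : 0 < ‖c‖ := norm_pos_iff.2 hc
  have hrad : 0 ≤ r ^ 2 - ‖c‖ ^ 2 / 4 := by nlinarith
  have hsign : (if s then (1 : ℝ) else -1) ^ 2 = 1 := by cases s <;> norm_num
  rw [div_pow, mul_pow, Real.sq_sqrt hrad, hsign]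
  field_simp
  ring

lemma norm_circleIntersection (hc : c ≠ 0) (hc2 : ‖c‖ ≤ 2 * r) :
    ‖circleIntersection r c s‖ = r := by
  refine (sq_eq_sq₀ (norm_nonneg _) (by linarith [norm_nonneg c])).1 ?_
  rw [circleIntersection, norm_half_add_mul_I_mul_sq, quarter_add_sq_mul_norm_sq s hc hc2]

lemma norm_circleIntersection_sub (hc : c ≠ 0) (hc2 : ‖c‖ ≤ 2 * r) :
    ‖circleIntersection r c s - c‖ = r := by
  refine (sq_eq_sq₀ (norm_nonneg _) (by linarith [norm_nonneg c])).1 ?_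
  have hsub : circleIntersection r c s - c = -((1 / 2 +
      (-((if s then 1 else -1) * √(r ^ 2 - ‖c‖ ^ 2 / 4) / ‖c‖) : ℝ) * I) * c) := by
    rw [circleIntersection]; push_cast; ring
  rw [hsub, norm_neg, norm_half_add_mul_I_mul_sq, neg_sq, quarter_add_sq_mul_norm_sq s hc hc2]

lemma im_circleIntersection_mul_conj_pos_iff (hc : c ≠ 0) (hc2 : ‖c‖ < 2 * r) :
    0 < (circleIntersection r c s * conj c).im ↔ s := by
  have hc0 : 0 < ‖c‖ := norm_pos_iff.2 hc
  have hrad : 0 < √(r ^ 2 - ‖c‖ ^ 2 / 4) := Real.sqrt_pos.2 (by nlinarith [norm_nonneg c])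
  have him : (circleIntersection r c s * conj c).im
      = (if s then 1 else -1) * (√(r ^ 2 - ‖c‖ ^ 2 / 4) * ‖c‖) := by
    rw [circleIntersection, mul_assoc, mul_conj, normSq_eq_norm_sq]
    simp only [mul_im, add_im, add_re, ofReal_re, ofReal_im, mul_re, I_re, I_im, div_ofNat_im,
      one_im, zero_div]
    field_simp
    ring
  rw [him]
  cases s <;> simp <;> positivity

lemma continuousOn_circleIntersection :
    ContinuousOn (fun c => circleIntersection r c s) {0}ᶜ := by
  unfold circleIntersection
  fun_prop (disch := intro x hx; simp_all)

end CircleIntersection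

section ProdDiscrete

variable {X A ι : Type*} [TopologicalSpace X] [TopologicalSpace A] [ConnectedSpace A]
  [TopologicalSpace ι] [DiscreteTopology ι] (e : X ≃ₜ A × ι)

lemma Homeomorph.connectedComponent_eq_preimage_univ_prod (x : X) :
    connectedComponent x = e ⁻¹' (univ ×ˢ {(e x).2}) := by
  rw [← e.isQuotientMap.isCoinducing.preimage_connectedComponent (fun y => ?_) x,
    connectedComponent_prod, PreconnectedSpace.connectedComponent_eq_univ,
    connectedComponent_eq_singleton]
  rw [← e.image_symm, image_singleton]
  exact isConnected_singleton

noncomputable def Homeomorph.connectedComponentsEquivOfProd : ConnectedComponents X ≃ ι :=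
  Equiv.ofBijective (continuous_snd.comp e.continuous).connectedComponentsLift <| by
    refine ⟨fun a b hab => ?_, fun i => ⟨.mk (e.symm (Classical.arbitrary A, i)), by simp⟩⟩
    obtain ⟨a, rfl⟩ := ConnectedComponents.surjective_coe a
    obtain ⟨b, rfl⟩ := ConnectedComponents.surjective_coe b
    have hab : (e a).2 = (e b).2 := hab
    rw [ConnectedComponents.coe_eq_coe, e.connectedComponent_eq_preimage_univ_prod,
      e.connectedComponent_eq_preimage_univ_prod, hab]

def Homeomorph.connectedComponentHomeomorphOfProd (x : X) : connectedComponent x ≃ₜ A :=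
  (e.subtype fun y => by rw [e.connectedComponent_eq_preimage_univ_prod x]; rfl).trans <|
    (Homeomorph.Set.prod univ {(e x).2}).trans <| (Homeomorph.prodUnique _ _).trans <|
      Homeomorph.Set.univ A

end ProdDiscrete

namespace pentagonTwoToriModuliSpace

variable (x : pentagonTwoToriModuliSpace)

lemma norm_two_sub_one : ‖x.1 2 - 1‖ = 1 := by
  simpa [dist_eq_norm', x.2.2.1] using x.2.2.2 1

lemma norm_three_sub_two : ‖x.1 3 - x.1 2‖ = 1 / 4 := by
  simpa [dist_eq_norm'] using x.2.2.2 2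

lemma norm_four_sub_three : ‖x.1 4 - x.1 3‖ = 1 / 4 := by
  simpa [dist_eq_norm'] using x.2.2.2 3

lemma norm_four : ‖x.1 4‖ = 1 := by
  simpa [x.2.1] using x.2.2.2 4

/-- For short edges `u / 4`, `v / 4`, closing the pentagon requires the long edges
`z = P 2 - P 1` and `P 4 - P 0` to differ by `gap u v`. -/
noncomputable def gap (u v : Circle) : ℂ := -(1 + (u + v) / 4)

lemma norm_add_div_four_le (u v : Circle) : ‖((u + v) / 4 : ℂ)‖ ≤ 1 / 2 := by
  rw [norm_div, RCLike.norm_ofNat]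
  linarith [norm_add_le (u : ℂ) v, Circle.norm_coe u, Circle.norm_coe v]

lemma gap_ne_zero (u v : Circle) : gap u v ≠ 0 := by
  have h := norm_add_div_four_le u v
  have h' := norm_sub_norm_le (1 : ℂ) (-((u + v) / 4 : ℂ))
  rw [gap, neg_ne_zero, ← norm_pos_iff]
  simp only [sub_neg_eq_add, norm_one, norm_neg] at h'
  linarith

lemma norm_gap_lt_two (u v : Circle) : ‖gap u v‖ < 2 := by
  rw [gap, norm_neg]
  linarith [norm_add_le (1 : ℂ) ((u + v) / 4), norm_add_div_four_le u v, norm_one (α := ℂ)]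

lemma norm_circleIntersection_gap (u v : Circle) (s : Bool) :
    ‖circleIntersection 1 (gap u v) s‖ = 1 ∧ ‖circleIntersection 1 (gap u v) s - gap u v‖ = 1 :=
  have h2 : ‖gap u v‖ ≤ 2 * 1 := by linarith [norm_gap_lt_two u v]
  ⟨norm_circleIntersection s (gap_ne_zero u v) h2,
    norm_circleIntersection_sub s (gap_ne_zero u v) h2⟩

def shortEdges : Circle × Circle :=
  (⟨4 * (x.1 3 - x.1 2), by simp [Submonoid.unitSphere, norm_three_sub_two]⟩,
    ⟨4 * (x.1 4 - x.1 3), by simp [Submonoid.unitSphere, norm_four_sub_three]⟩)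

lemma coe_shortEdges_fst : (x.shortEdges.1 : ℂ) = 4 * (x.1 3 - x.1 2) := rfl

lemma coe_shortEdges_snd : (x.shortEdges.2 : ℂ) = 4 * (x.1 4 - x.1 3) := rfl

lemma gap_shortEdges : gap x.shortEdges.1 x.shortEdges.2 = x.1 2 - 1 - x.1 4 := by
  simp only [gap, shortEdges]; ring

noncomputable def side : Bool :=
  decide (0 < ((x.1 2 - 1) * conj (gap x.shortEdges.1 x.shortEdges.2)).im)

noncomputable def vertices (u v : Circle) (s : Bool) : Fin 5 → ℂ :=
  let z := circleIntersection 1 (gap u v) s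
  ![0, 1, 1 + z, 1 + z + u / 4, 1 + z + u / 4 + v / 4]

lemma dist_vertices (u v : Circle) (s : Bool) (i : Fin 5) :
    dist (vertices u v s i) (vertices u v s (i + 1)) = ![1, 1, 1/4, 1/4, 1] i := by
  obtain ⟨hz, hzc⟩ := norm_circleIntersection_gap u v s
  fin_cases i <;> simp [vertices, dist_eq_norm', hz, Circle.norm_coe]
  rw [← norm_neg] at hzc
  refine Eq.trans (congrArg norm ?_) hzc
  rw [gap]; ring

noncomputable def ofTori (y : (Circle × Circle) × Bool) : pentagonTwoToriModuliSpace :=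
  ⟨vertices y.1.1 y.1.2 y.2, rfl, rfl, dist_vertices y.1.1 y.1.2 y.2⟩

lemma circleIntersection_gap_shortEdges_side :
    circleIntersection 1 (gap x.shortEdges.1 x.shortEdges.2) x.side = x.1 2 - 1 := by
  have hc := gap_ne_zero x.shortEdges.1 x.shortEdges.2
  have h2 : ‖gap x.shortEdges.1 x.shortEdges.2‖ < 2 * 1 := by
    linarith [norm_gap_lt_two x.shortEdges.1 x.shortEdges.2]
  obtain ⟨hw, hwc⟩ := norm_circleIntersection_gap x.shortEdges.1 x.shortEdges.2 x.side
  refine eq_of_norm_eq_of_norm_sub_eq hc hw hwc x.norm_two_sub_one ?_ ?_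
  · rw [gap_shortEdges, sub_sub_cancel, norm_four]
  · rw [im_circleIntersection_mul_conj_pos_iff _ hc h2, side, decide_eq_true_iff]

lemma shortEdges_ofTori (y : (Circle × Circle) × Bool) : (ofTori y).shortEdges = y.1 := by
  ext <;> simp [shortEdges, ofTori, vertices] <;> ring

lemma side_ofTori (y : (Circle × Circle) × Bool) : (ofTori y).side = y.2 := by
  have hc := gap_ne_zero y.1.1 y.1.2
  have h2 : ‖gap y.1.1 y.1.2‖ < 2 * 1 := by linarith [norm_gap_lt_two y.1.1 y.1.2]
  have hz : (ofTori y).1 2 - 1 = circleIntersection 1 (gap y.1.1 y.1.2) y.2 := by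
    simp [ofTori, vertices]
  rw [side, shortEdges_ofTori, hz]
  simp only [im_circleIntersection_mul_conj_pos_iff _ hc h2, Bool.decide_eq_true]

noncomputable def equivTori : pentagonTwoToriModuliSpace ≃ (Circle × Circle) × Bool where
  toFun x := (x.shortEdges, x.side)
  invFun := ofTori
  left_inv x := by
    apply Subtype.ext
    funext i
    have h := x.circleIntersection_gap_shortEdges_side
    fin_cases i <;>
      simp [ofTori, vertices, h, x.2.1, x.2.2.1, coe_shortEdges_fst, coe_shortEdges_snd]
  right_inv y := Prod.ext (shortEdges_ofTori y) (side_ofTori y)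

lemma continuous_ofTori : Continuous ofTori := by
  refine Continuous.subtype_mk (continuous_prod_of_discrete_right.2 fun s => ?_) _
  have hz : Continuous fun q : Circle × Circle => circleIntersection 1 (gap q.1 q.2) s :=
    (continuousOn_circleIntersection s).comp_continuous (by unfold gap; fun_prop)
      fun q => gap_ne_zero q.1 q.2
  refine continuous_pi fun i => ?_
  fin_cases i <;> simp only [vertices] <;> fun_prop

noncomputable def homeomorphTori : pentagonTwoToriModuliSpace ≃ₜ (Circle × Circle) × Bool :=
  (continuous_ofTori.homeoOfEquivCompactToT2 (f := equivTori.symm)).symm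

end pentagonTwoToriModuliSpace

/-- For the pentagonal linkage `l = (1, 1, 1/4, 1/4, 1)`, the moduli
space `M(l)` (realized as the slice above) has exactly two connected components, and each
connected component, with its subspace topology, is homeomorphic to the 2-torus
`Circle × Circle`. -/
theorem pentagon_two_tori_moduli_space :
    Nonempty (ConnectedComponents pentagonTwoToriModuliSpace ≃ Fin 2) ∧
    ∀ x : pentagonTwoToriModuliSpace,
      Nonempty ((connectedComponent x : Set pentagonTwoToriModuliSpace) ≃ₜ
        (Circle × Circle)) :=
  let e := pentagonTwoToriModuliSpace.homeomorphTori
  ⟨⟨e.connectedComponentsEquivOfProd.trans finTwoEquiv.symm⟩,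
    fun x => ⟨e.connectedComponentHomeomorphOfProd x⟩⟩
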